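/- arXiv:2504.03538 — 3 statements merged into one kernel-verified Lean document; each statement's English description precedes it below -/
import Mathlib

section
/- Let φ : [0,1] → ℝ be strictly positive and of class C¹. Define the secant function S[φ] on [0,1]² by S[φ](x,y) = (1/(y−x))·∫_x^y φ(t) dt for x ≠ y, and S[φ](x,x) = φ(x). Then S[φ] is of class C¹ on [0,1]², and the sup norm of its total derivative is bounded by ‖φ′‖_∞. -/
/-!
Extend `φ` to a `C¹` function `ψ` on `ℝ` whose derivative only takes values of `φ'` on `[0,1]`
(integrate `φ'` clamped to `[0,1]`). On the square, `S(x,y) = ∫₀¹ ψ(x + (y-x)t) dt`, and this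
formula is `C¹` on all of `ℝ²` by differentiation under the integral sign, with derivative
`∫₀¹ ψ'(x + (y-x)t) ((1-t) dx + t dy)`. Each `(1-t) dx + t dy` has norm at most `1` for the
sup norm of `ℝ × ℝ`, and for a linear form on `ℝ × ℝ` that operator norm dominates `|∂ₓ| + |∂_y|`.
-/

open Filter Topology Set MeasureTheory ContinuousLinearMap

theorem exists_contDiff_extension_of_contDiffOn_Icc {a b : ℝ} (hab : a < b) {φ : ℝ → ℝ}
    (hφ : ContDiffOn ℝ 1 φ (Icc a b)) :
    ∃ ψ : ℝ → ℝ, ContDiff ℝ 1 ψ ∧ EqOn ψ φ (Icc a b) ∧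
      range (deriv ψ) ⊆ derivWithin φ (Icc a b) '' Icc a b := by
  set g : ℝ → ℝ := fun s => derivWithin φ (Icc a b) (projIcc a b hab.le s)
  have hg : Continuous g :=
    (hφ.continuousOn_derivWithin (uniqueDiffOn_Icc hab) le_rfl).comp_continuous
      (continuous_subtype_val.comp continuous_projIcc) fun s => (projIcc a b hab.le s).2
  set ψ : ℝ → ℝ := fun x => φ a + ∫ s in a..x, g s
  have hψ (x : ℝ) : HasDerivAt ψ (g x) x :=
    ((hg.integral_hasStrictDerivAt a x).hasDerivAt).const_add (φ a)
  have hderiv : deriv ψ = g := funext fun x => (hψ x).deriv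
  refine ⟨ψ, contDiff_one_iff_deriv.2 ⟨fun x => (hψ x).differentiableAt, hderiv ▸ hg⟩, ?_, ?_⟩
  · refine eq_of_derivWithin_eq (fun x _ => (hψ x).differentiableAt.differentiableWithinAt)
      (hφ.differentiableOn one_ne_zero) (fun x hx => ?_) (by simp [ψ])
    have hx' := mem_Icc_of_Ico hx
    rw [(hψ x).hasDerivWithinAt.derivWithin (uniqueDiffOn_Icc hab x hx')]
    simp [g, projIcc_of_mem hab.le hx']
  · rintro _ ⟨x, rfl⟩
    exact ⟨_, (projIcc a b hab.le x).2, (congrFun hderiv x).symm⟩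

noncomputable def segmentPointCLM (t : ℝ) : ℝ × ℝ →L[ℝ] ℝ :=
  (1 - t) • fst ℝ ℝ ℝ + t • snd ℝ ℝ ℝ

lemma segmentPointCLM_apply (t : ℝ) (v : ℝ × ℝ) :
    segmentPointCLM t v = (1 - t) * v.1 + t * v.2 := by
  simp [segmentPointCLM]

lemma continuous_segmentPointCLM : Continuous segmentPointCLM := by
  unfold segmentPointCLM; fun_prop

lemma norm_segmentPointCLM_le {t : ℝ} (ht : t ∈ Icc (0:ℝ) 1) : ‖segmentPointCLM t‖ ≤ 1 := by
  refine opNorm_le_bound _ zero_le_one fun v => ?_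
  rw [segmentPointCLM_apply, one_mul]
  calc |(1 - t) * v.1 + t * v.2| ≤ (1 - t) * |v.1| + t * |v.2| := by
        refine (abs_add_le _ _).trans_eq ?_
        rw [abs_mul, abs_mul, abs_of_nonneg (sub_nonneg.2 ht.2), abs_of_nonneg ht.1]
    _ ≤ (1 - t) * ‖v‖ + t * ‖v‖ := by
        gcongr
        · exact sub_nonneg.2 ht.2
        · exact norm_fst_le v
        · exact ht.1
        · exact norm_snd_le v
    _ = ‖v‖ := by ring

lemma hasFDerivAt_segmentPoint (t : ℝ) (p : ℝ × ℝ) :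
    HasFDerivAt (fun q : ℝ × ℝ => q.1 + (q.2 - q.1) * t) (segmentPointCLM t) p := by
  convert (segmentPointCLM t).hasFDerivAt using 1
  funext q; rw [segmentPointCLM_apply]; ring

noncomputable def segmentMean (ψ : ℝ → ℝ) (q : ℝ × ℝ) : ℝ :=
  ∫ t in (0:ℝ)..1, ψ (q.1 + (q.2 - q.1) * t)

section SegmentMean
variable {ψ : ℝ → ℝ}

lemma segmentMean_diag (x : ℝ) : segmentMean ψ (x, x) = ψ x := by
  simp [segmentMean]

lemma segmentMean_of_ne {x y : ℝ} (hxy : x ≠ y) :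
    segmentMean ψ (x, y) = (∫ s in x..y, ψ s) / (y - x) := by
  rw [eq_div_iff (sub_ne_zero.2 hxy.symm), segmentMean, mul_comm,
    intervalIntegral.mul_integral_comp_add_mul]
  simp

lemma norm_smul_segmentPointCLM_le {C : ℝ} (hC : ∀ x, |deriv ψ x| ≤ C) {t : ℝ}
    (ht : t ∈ Icc (0:ℝ) 1) (q : ℝ × ℝ) :
    ‖deriv ψ (q.1 + (q.2 - q.1) * t) • segmentPointCLM t‖ ≤ C :=
  calc ‖deriv ψ (q.1 + (q.2 - q.1) * t) • segmentPointCLM t‖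
      = |deriv ψ (q.1 + (q.2 - q.1) * t)| * ‖segmentPointCLM t‖ := norm_smul _ _
    _ ≤ C * 1 := by
        gcongr
        · exact (abs_nonneg _).trans (hC 0)
        · exact hC _
        · exact norm_segmentPointCLM_le ht
    _ = C := mul_one C

lemma hasFDerivAt_segmentMean (hψ : Differentiable ℝ ψ) {C : ℝ} (hC : ∀ x, |deriv ψ x| ≤ C)
    (p : ℝ × ℝ) :
    HasFDerivAt (segmentMean ψ)
      (∫ t in (0:ℝ)..1, deriv ψ (p.1 + (p.2 - p.1) * t) • segmentPointCLM t) p := by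
  have hpoint (q : ℝ × ℝ) : Continuous fun t : ℝ => q.1 + (q.2 - q.1) * t := by fun_prop
  refine intervalIntegral.hasFDerivAt_integral_of_dominated_of_fderiv_le (μ := volume)
    (F' := fun q t => deriv ψ (q.1 + (q.2 - q.1) * t) • segmentPointCLM t)
    (bound := fun _ => C) univ_mem ?_ ?_ ?_ ?_ intervalIntegrable_const ?_
  · exact Eventually.of_forall fun q => (hψ.continuous.comp (hpoint q)).aestronglyMeasurable
  · exact (hψ.continuous.comp (hpoint p)).intervalIntegrable 0 1
  · exact (((measurable_deriv ψ).comp (hpoint p).measurable).smul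
      continuous_segmentPointCLM.measurable).aestronglyMeasurable
  · refine ae_of_all _ fun t ht q _ => ?_
    rw [uIoc_of_le zero_le_one] at ht
    exact norm_smul_segmentPointCLM_le hC (Ioc_subset_Icc_self ht) q
  · exact ae_of_all _ fun t _ q _ =>
      (hψ _).hasDerivAt.comp_hasFDerivAt q (hasFDerivAt_segmentPoint t q)

lemma norm_fderiv_segmentMean_le (hψ : Differentiable ℝ ψ) {C : ℝ} (hC : ∀ x, |deriv ψ x| ≤ C)
    (p : ℝ × ℝ) : ‖fderiv ℝ (segmentMean ψ) p‖ ≤ C := by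
  rw [(hasFDerivAt_segmentMean hψ hC p).fderiv]
  refine (intervalIntegral.norm_integral_le_of_norm_le_const fun t ht => ?_).trans_eq
    (by rw [sub_zero, abs_one, mul_one])
  rw [uIoc_of_le zero_le_one] at ht
  exact norm_smul_segmentPointCLM_le hC (Ioc_subset_Icc_self ht) p

lemma contDiff_segmentMean (hψ : ContDiff ℝ 1 ψ) {C : ℝ} (hC : ∀ x, |deriv ψ x| ≤ C) :
    ContDiff ℝ 1 (segmentMean ψ) := by
  refine contDiff_one_iff_hasFDerivAt.2
    ⟨_, ?_, hasFDerivAt_segmentMean (hψ.differentiable one_ne_zero) hC⟩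
  refine intervalIntegral.continuous_parametric_intervalIntegral_of_continuous' ?_ 0 1
  exact ((hψ.continuous_deriv le_rfl).comp (by fun_prop)).smul
    (continuous_segmentPointCLM.comp continuous_snd)

end SegmentMean

lemma abs_apply_add_abs_apply_le_opNorm (L : ℝ × ℝ →L[ℝ] ℝ) :
    |L (1, 0)| + |L (0, 1)| ≤ ‖L‖ := by
  have hsign (a : ℝ) : ∃ s : ℝ, |s| ≤ 1 ∧ s * a = |a| := by
    rcases le_total 0 a with h | h
    exacts [⟨1, by simp, by simp [abs_of_nonneg h]⟩, ⟨-1, by simp, by simp [abs_of_nonpos h]⟩]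
  obtain ⟨s, hs, hsL⟩ := hsign (L (1, 0))
  obtain ⟨u, hu, huL⟩ := hsign (L (0, 1))
  have hL : L (s, u) = s * L (1, 0) + u * L (0, 1) := by
    rw [show ((s, u) : ℝ × ℝ) = s • (1, 0) + u • (0, 1) by simp, map_add, map_smul, map_smul,
      smul_eq_mul, smul_eq_mul]
  calc |L (1, 0)| + |L (0, 1)| = L (s, u) := by rw [hL, hsL, huL]
    _ ≤ ‖L‖ * ‖((s, u) : ℝ × ℝ)‖ := (le_abs_self _).trans (L.le_opNorm _)
    _ ≤ ‖L‖ := mul_le_of_le_one_right (norm_nonneg _) (by simpa [Prod.norm_def] using ⟨hs, hu⟩)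

theorem stmt5_general (φ : ℝ → ℝ)
    (hφ : ContDiffOn ℝ 1 φ (Icc 0 1))
    (S : ℝ × ℝ → ℝ)
    (hSoff : ∀ x y : ℝ, x ≠ y → S (x, y) = (∫ t in x..y, φ t) / (y - x))
    (hSdiag : ∀ x : ℝ, S (x, x) = φ x)
    (M : ℝ) (hM : ∀ t ∈ Icc (0:ℝ) 1, |derivWithin φ (Icc 0 1) t| ≤ M) :
    ContDiffOn ℝ 1 S (Icc 0 1 ×ˢ Icc 0 1) ∧
      ∀ q ∈ (Icc (0:ℝ) 1 ×ˢ Icc (0:ℝ) 1),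
        |fderivWithin ℝ S (Icc 0 1 ×ˢ Icc 0 1) q (1, 0)| +
          |fderivWithin ℝ S (Icc 0 1 ×ˢ Icc 0 1) q (0, 1)| ≤ M := by
  obtain ⟨ψ, hψ, hψφ, hderiv⟩ := exists_contDiff_extension_of_contDiffOn_Icc zero_lt_one hφ
  have hC (x : ℝ) : |deriv ψ x| ≤ M := by
    obtain ⟨s, hs, hsx⟩ := hderiv ⟨x, rfl⟩
    exact hsx ▸ hM s hs
  have hS : EqOn S (segmentMean ψ) (Icc 0 1 ×ˢ Icc 0 1) := by
    rintro ⟨x, y⟩ ⟨hx, hy⟩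
    rcases eq_or_ne x y with rfl | hxy
    · rw [hSdiag, segmentMean_diag, hψφ hx]
    · rw [hSoff x y hxy, segmentMean_of_ne hxy,
        intervalIntegral.integral_congr fun s hs => hψφ (uIcc_subset_Icc hx hy hs)]
  have hT := contDiff_segmentMean hψ hC
  refine ⟨hT.contDiffOn.congr hS, fun q hq => ?_⟩
  rw [fderivWithin_congr hS (hS hq), (hT.differentiable one_ne_zero q).fderivWithin
    ((uniqueDiffOn_Icc zero_lt_one).prod (uniqueDiffOn_Icc zero_lt_one) q hq)]
  exact (abs_apply_add_abs_apply_le_opNorm _).trans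
    (norm_fderiv_segmentMean_le (hψ.differentiable one_ne_zero) hC q)

/-- For a strictly positive `C¹` density `φ` on `[0,1]`, the secant
function `S[φ](x,y) = (∫_x^y φ)/(y-x)`, `S[φ](x,x) = φ(x)` is `C¹` on the square
`[0,1]²`, with `|∂S/∂x| + |∂S/∂y|` bounded by `‖φ'‖_∞`. -/
theorem stmt5 (φ : ℝ → ℝ)
    (hφ : ContDiffOn ℝ 1 φ (Icc 0 1))
    (hφpos : ∀ x ∈ Icc (0:ℝ) 1, 0 < φ x)
    (S : ℝ × ℝ → ℝ)
    (hSoff : ∀ x y : ℝ, x ≠ y → S (x, y) = (∫ t in x..y, φ t) / (y - x))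
    (hSdiag : ∀ x : ℝ, S (x, x) = φ x)
    (M : ℝ) (hM : ∀ t ∈ Icc (0:ℝ) 1, |derivWithin φ (Icc 0 1) t| ≤ M) :
    ContDiffOn ℝ 1 S (Icc 0 1 ×ˢ Icc 0 1) ∧
      ∀ q ∈ (Icc (0:ℝ) 1 ×ˢ Icc (0:ℝ) 1),
        |fderivWithin ℝ S (Icc 0 1 ×ˢ Icc 0 1) q (1, 0)| +
          |fderivWithin ℝ S (Icc 0 1 ×ˢ Icc 0 1) q (0, 1)| ≤ M :=
  stmt5_general φ hφ S hSoff hSdiag M hM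
end

section
/- Let q : ℕ → ℝ be a sequence with q(n) ≥ 0, q(n) → 0 as n → ∞, and lim_{v→1⁻} Σ q(n) v^n = ∞. Then Σ q(n)² v^n = o(Σ q(n) v^n) as v → 1⁻. -/
open Filter Topology Set

/-- If `q(n) ≥ 0`, `q(n) → 0`, and `Σ q(n) v^n → ∞` as `v → 1⁻`,
then `Σ q(n)² v^n = o(Σ q(n) v^n)` as `v → 1⁻`. -/
theorem stmt9 (q : ℕ → ℝ)
    (hq0 : ∀ n, 0 ≤ q n)
    (hqlim : Tendsto q atTop (𝓝 0))
    (hdiv : Tendsto (fun v : ℝ => ∑' n, q n * v ^ n) (𝓝[Ico (0:ℝ) 1] 1) atTop) :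
    Tendsto (fun v : ℝ => (∑' n, (q n) ^ 2 * v ^ n) / (∑' n, q n * v ^ n))
      (𝓝[Ico (0:ℝ) 1] 1) (𝓝 0) := by
  obtain ⟨M, hM⟩ : ∃ M, ∀ n, q n ≤ M := by
    obtain ⟨M, hM⟩ := hqlim.bddAbove_range
    exact ⟨M, fun n => hM ⟨n, rfl⟩⟩
  have hsum : ∀ v ∈ Ico (0:ℝ) 1, Summable (fun n => q n * v ^ n) := by
    intro v hv
    apply Summable.of_nonneg_of_le (fun n => mul_nonneg (hq0 n) (pow_nonneg hv.1 n))
      (fun n => mul_le_mul_of_nonneg_right (hM n) (pow_nonneg hv.1 n))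
    exact (summable_geometric_of_lt_one hv.1 hv.2).mul_left M
  have hsum2 : ∀ v ∈ Ico (0:ℝ) 1, Summable (fun n => q n ^ 2 * v ^ n) := by
    intro v hv
    apply Summable.of_nonneg_of_le (fun n => mul_nonneg (sq_nonneg _) (pow_nonneg hv.1 n))
      (fun n => mul_le_mul_of_nonneg_right (pow_le_pow_left₀ (hq0 n) (hM n) 2)
        (pow_nonneg hv.1 n))
    exact (summable_geometric_of_lt_one hv.1 hv.2).mul_left (M ^ 2)
  rw [Metric.tendsto_nhds]
  intro ε hε
  obtain ⟨N, hN⟩ := Metric.tendsto_atTop.1 hqlim (ε / 2) (by positivity)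
  set C : ℝ := ∑ n ∈ Finset.range N, q n ^ 2 with hCdef
  have hC0 : 0 ≤ C := Finset.sum_nonneg fun n _ => sq_nonneg _
  filter_upwards [hdiv.eventually_ge_atTop (max 1 (2 * C / ε + 1)), self_mem_nhdsWithin]
    with v hSv hv
  set S := ∑' n, q n * v ^ n with hSdef
  have hS1 : (1:ℝ) ≤ S := le_trans (le_max_left _ _) hSv
  have hS0 : 0 < S := lt_of_lt_of_le one_pos hS1
  have hfin : Summable (fun n => if n < N then q n ^ 2 else 0) := by
    apply summable_of_ne_finset_zero (s := Finset.range N)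
    intro n hn
    simp [Finset.mem_range.not.1 hn]
  have hrhs : Summable (fun n => (if n < N then q n ^ 2 else 0) + (ε / 2) * (q n * v ^ n)) :=
    hfin.add ((hsum v hv).mul_left _)
  have hle : (∑' n, q n ^ 2 * v ^ n) ≤ C + (ε / 2) * S := by
    have hterm : ∀ n, q n ^ 2 * v ^ n ≤
        (if n < N then q n ^ 2 else 0) + (ε / 2) * (q n * v ^ n) := by
      intro n
      by_cases hn : n < N
      · simp only [hn, if_true]
        have h1 : q n ^ 2 * v ^ n ≤ q n ^ 2 := by
          nlinarith [pow_le_one₀ hv.1 hv.2.le (n := n), sq_nonneg (q n),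
            pow_nonneg hv.1 n]
        have h2 : 0 ≤ (ε / 2) * (q n * v ^ n) :=
          mul_nonneg (by linarith) (mul_nonneg (hq0 n) (pow_nonneg hv.1 n))
        linarith
      · simp only [hn, if_false, zero_add]
        have hq : q n ≤ ε / 2 := by
          have := hN n (le_of_not_gt hn)
          rw [Real.dist_eq, sub_zero] at this
          linarith [le_abs_self (q n)]
        have : q n ^ 2 * v ^ n = q n * (q n * v ^ n) := by ring
        rw [this]
        exact mul_le_mul_of_nonneg_right hq (mul_nonneg (hq0 n) (pow_nonneg hv.1 n))
    calc (∑' n, q n ^ 2 * v ^ n)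
        ≤ ∑' n, ((if n < N then q n ^ 2 else 0) + (ε / 2) * (q n * v ^ n)) :=
          Summable.tsum_le_tsum hterm (hsum2 v hv) hrhs
      _ = (∑' n, (if n < N then q n ^ 2 else 0)) + (ε / 2) * S := by
          rw [Summable.tsum_add hfin ((hsum v hv).mul_left _), tsum_mul_left]
      _ = C + (ε / 2) * S := by
          congr 1
          have hCalt : C = ∑ n ∈ Finset.range N, (if n < N then q n ^ 2 else 0) :=
            Finset.sum_congr rfl (fun n hn => by simp [Finset.mem_range.1 hn])
          rw [hCalt]
          exact tsum_eq_sum (fun n hn => by simp [Finset.mem_range.not.1 hn])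
  have hT0 : 0 ≤ ∑' n, q n ^ 2 * v ^ n :=
    tsum_nonneg fun n => mul_nonneg (sq_nonneg _) (pow_nonneg hv.1 n)
  rw [Real.dist_eq, sub_zero, abs_of_nonneg (div_nonneg hT0 hS0.le)]
  rw [div_lt_iff₀ hS0]
  have hS2 : 2 * C / ε + 1 ≤ S := le_trans (le_max_right _ _) hSv
  have : C < (ε / 2) * S := by
    have : (ε / 2) * (2 * C / ε + 1) = C + ε / 2 := by field_simp
    nlinarith
  linarith
end

section
/- Let q : ℕ → (0,1] satisfy the recurrence q(0) = 1, q(n+1) = q(n)(1 − v(q(n))) where v(x) = x^γ V₁(x), γ > 0, V₁ slowly varying at 0 of class C¹ with xV₁′(x)/V₁(x) → 0 at 0, and suppose q(n) → 0. Then v(q(n)) ∼ 1/(γn) as n → ∞. -/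
/-!
Write `w n = v (q n)`. The recurrence gives
`v (q n) / v (q (n + 1)) = (1 - w n) ^ (-γ) * (V₁ (q n) / V₁ (q (n + 1)))`.
Since `x V₁'(x) / V₁(x) → 0`, the function `log ∘ V₁ ∘ exp` has derivative tending to `0` at `-∞`,
so across one step `log V₁` moves by `o(log q n - log q (n + 1)) = o(w n)`. Together with
`(1 - w) ^ (-γ) = 1 + γ w + o(w)` this yields `1 / w (n + 1) - 1 / w n → γ`, and Cesàro averaging
gives `1 / w n ∼ γ n`. The same logarithmic bound shows `V₁ x = O(x ^ (-γ / 2))`, whence `w n → 0`.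
-/

open Filter Topology Set Real Asymptotics

theorem abs_sub_le_mul_log_sub_log {g g' : ℝ → ℝ} {a b ε : ℝ} (ha : 0 < a) (hab : a ≤ b)
    (hg : ∀ x ∈ Icc a b, HasDerivAt g (g' x) x) (hε : ∀ x ∈ Icc a b, |x * g' x| ≤ ε) :
    |g b - g a| ≤ ε * (log b - log a) := by
  have hb : 0 < b := ha.trans_le hab
  have hlog : log a ≤ log b := log_le_log ha hab
  have hexp : ∀ t ∈ Icc (log a) (log b), exp t ∈ Icc a b := fun t ht =>
    ⟨by simpa [exp_log ha] using exp_le_exp.2 ht.1, by simpa [exp_log hb] using exp_le_exp.2 ht.2⟩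
  have := (convex_Icc (log a) (log b)).norm_image_sub_le_of_norm_hasDerivWithin_le
    (f := g ∘ exp) (f' := fun t => g' (exp t) * exp t)
    (fun t ht => ((hg _ (hexp t ht)).comp t (hasDerivAt_exp t)).hasDerivWithinAt)
    (fun t ht => by simpa only [norm_eq_abs, mul_comm] using hε _ (hexp t ht))
    (left_mem_Icc.2 hlog) (right_mem_Icc.2 hlog)
  simpa [exp_log ha, exp_log hb, abs_of_nonneg (sub_nonneg.2 hlog)] using this

theorem tendsto_one_sub_rpow_neg_sub_one_div (γ : ℝ) :
    Tendsto (fun u => ((1 - u) ^ (-γ) - 1) / u) (𝓝[≠] 0) (𝓝 γ) := by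
  have h : HasDerivAt (fun u => (1 - u) ^ (-γ)) γ 0 := by
    simpa using ((hasDerivAt_id (0 : ℝ)).const_sub 1).rpow_const (p := -γ) (by simp)
  refine h.tendsto_slope.congr fun u => ?_
  simp [slope_def_field]

theorem tendsto_one_sub_rpow_neg_mul_sub_one_div {γ : ℝ} {w ρ : ℕ → ℝ}
    (hw : Tendsto w atTop (𝓝[≠] 0)) (hρ : (fun n => ρ n - 1) =o[atTop] w) :
    Tendsto (fun n => ((1 - w n) ^ (-γ) * ρ n - 1) / w n) atTop (𝓝 γ) := by
  have hρ1 : Tendsto ρ atTop (𝓝 1) := by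
    simpa using (hρ.trans_tendsto (tendsto_nhds_of_tendsto_nhdsWithin hw)).add_const 1
  have := (((tendsto_one_sub_rpow_neg_sub_one_div γ).comp hw).mul hρ1).add hρ.tendsto_div_nhds_zero
  rw [mul_one, add_zero] at this
  refine this.congr fun n => ?_
  simp only [Function.comp_apply, div_eq_mul_inv]
  ring

theorem tendsto_div_natCast_of_tendsto_sub {b : ℕ → ℝ} {c : ℝ}
    (h : Tendsto (fun n => b (n + 1) - b n) atTop (𝓝 c)) :
    Tendsto (fun n => b n / n) atTop (𝓝 c) := by
  have := h.cesaro.add (tendsto_const_div_atTop_nhds_zero_nat (b 0))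
  rw [add_zero] at this
  refine this.congr fun n => ?_
  rw [Finset.sum_range_sub (fun i => b i), inv_mul_eq_div, ← add_div, sub_add_cancel]

section SlowVariation

variable {V : ℝ → ℝ}

theorem exists_abs_log_sub_log_le (hd : ∀ᶠ x in 𝓝[>] 0, DifferentiableAt ℝ V x)
    (hpos : ∀ᶠ x in 𝓝[>] 0, 0 < V x)
    (hratio : Tendsto (fun x => x * deriv V x / V x) (𝓝[>] 0) (𝓝 0)) {ε : ℝ} (hε : 0 < ε) :
    ∃ δ > 0, ∀ a b, 0 < a → a ≤ b → b ≤ δ → |log (V b) - log (V a)| ≤ ε * (log b - log a) := by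
  have hsmall : ∀ᶠ x in 𝓝[>] 0, |x * deriv V x / V x| ≤ ε := by
    filter_upwards [hratio.eventually (Icc_mem_nhds (neg_lt_zero.2 hε) hε)] with x hx
    exact abs_le.2 hx
  obtain ⟨δ, hδ, hsub⟩ := mem_nhdsGT_iff_exists_Ioc_subset.1 (hd.and (hpos.and hsmall))
  refine ⟨δ, hδ, fun a b ha hab hb => ?_⟩
  have hgood : ∀ x ∈ Icc a b, _ := fun x hx => hsub ⟨ha.trans_le hx.1, hx.2.trans hb⟩
  refine abs_sub_le_mul_log_sub_log ha hab (g' := fun x => deriv V x / V x)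
    (fun x hx => (hgood x hx).1.hasDerivAt.log (hgood x hx).2.1.ne') (fun x hx => ?_)
  simpa only [mul_div_assoc] using (hgood x hx).2.2

theorem tendsto_rpow_mul_nhdsGT_zero {γ : ℝ} (hγ : 0 < γ)
    (hd : ∀ᶠ x in 𝓝[>] 0, DifferentiableAt ℝ V x) (hpos : ∀ᶠ x in 𝓝[>] 0, 0 < V x)
    (hratio : Tendsto (fun x => x * deriv V x / V x) (𝓝[>] 0) (𝓝 0)) :
    Tendsto (fun x => x ^ γ * V x) (𝓝[>] 0) (𝓝 0) := by
  obtain ⟨δ, hδ, hlog⟩ := exists_abs_log_sub_log_le hd hpos hratio (half_pos hγ)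
  have hbound : ∀ᶠ x in 𝓝[>] 0, x ^ γ * V x ≤ exp (log (V δ) + γ / 2 * log δ + γ / 2 * log x) := by
    filter_upwards [hpos, Ioc_mem_nhdsGT hδ] with x hVx hx
    have := (abs_le.1 (hlog x δ hx.1 hx.2 le_rfl)).1
    calc x ^ γ * V x = exp (γ * log x + log (V x)) := by
          rw [exp_add, exp_log hVx, rpow_def_of_pos hx.1, mul_comm γ]
      _ ≤ exp (log (V δ) + γ / 2 * log δ + γ / 2 * log x) := exp_le_exp.2 (by linarith)
  have hnonneg : ∀ᶠ x in 𝓝[>] 0, 0 ≤ x ^ γ * V x := by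
    filter_upwards [hpos, self_mem_nhdsWithin] with x hVx hx
    exact mul_nonneg (rpow_nonneg (le_of_lt hx) γ) hVx.le
  exact squeeze_zero' hnonneg hbound <| tendsto_exp_atBot.comp <|
    tendsto_atBot_add_const_left _ _ (tendsto_log_nhdsGT_zero.const_mul_atBot (half_pos hγ))

variable {q w : ℕ → ℝ}

theorem isLittleO_log_sub_log (hd : ∀ᶠ x in 𝓝[>] 0, DifferentiableAt ℝ V x)
    (hpos : ∀ᶠ x in 𝓝[>] 0, 0 < V x)
    (hratio : Tendsto (fun x => x * deriv V x / V x) (𝓝[>] 0) (𝓝 0))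
    (hq : Tendsto q atTop (𝓝[>] 0)) (hw : Tendsto w atTop (𝓝 0)) (hw0 : ∀ᶠ n in atTop, 0 ≤ w n)
    (hrec : ∀ n, q (n + 1) = q n * (1 - w n)) :
    (fun n => log (V (q n)) - log (V (q (n + 1)))) =o[atTop] w := by
  refine isLittleO_iff.2 fun c hc => ?_
  obtain ⟨δ, hδ, hlog⟩ := exists_abs_log_sub_log_le hd hpos hratio (half_pos hc)
  filter_upwards [hq.eventually (Ioc_mem_nhdsGT hδ), hw.eventually (gt_mem_nhds one_half_pos), hw0]
    with n hqn hwn hw0n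
  have h1w : 0 < 1 - w n := by linarith
  have hqn' : 0 < q (n + 1) := by rw [hrec]; exact mul_pos hqn.1 h1w
  have hstep : q (n + 1) ≤ q n := by rw [hrec]; exact mul_le_of_le_one_right hqn.1.le (by linarith)
  have hdrop : log (q n) - log (q (n + 1)) ≤ 2 * w n := by
    have := one_sub_inv_le_log_of_pos h1w
    have : (1 - w n)⁻¹ ≤ 1 + 2 * w n := by
      rw [inv_le_iff_one_le_mul₀ h1w]; nlinarith
    rw [hrec, log_mul hqn.1.ne' h1w.ne']
    linarith
  calc ‖log (V (q n)) - log (V (q (n + 1)))‖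
      = |log (V (q n)) - log (V (q (n + 1)))| := norm_eq_abs _
    _ ≤ c / 2 * (log (q n) - log (q (n + 1))) := hlog _ _ hqn' hstep hqn.2
    _ ≤ c / 2 * (2 * w n) := by gcongr
    _ = c * ‖w n‖ := by rw [norm_of_nonneg hw0n]; ring

theorem isLittleO_div_sub_one (hd : ∀ᶠ x in 𝓝[>] 0, DifferentiableAt ℝ V x)
    (hpos : ∀ᶠ x in 𝓝[>] 0, 0 < V x)
    (hratio : Tendsto (fun x => x * deriv V x / V x) (𝓝[>] 0) (𝓝 0))
    (hq : Tendsto q atTop (𝓝[>] 0)) (hw : Tendsto w atTop (𝓝 0)) (hw0 : ∀ᶠ n in atTop, 0 ≤ w n)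
    (hrec : ∀ n, q (n + 1) = q n * (1 - w n)) :
    (fun n => V (q n) / V (q (n + 1)) - 1) =o[atTop] w := by
  have hθ := isLittleO_log_sub_log hd hpos hratio hq hw hw0 hrec
  have hexp := ((hasDerivAt_exp 0).isBigO_sub.comp_tendsto (hθ.trans_tendsto hw)).trans_isLittleO
    (hθ.congr_left fun n => (sub_zero _).symm)
  refine hexp.congr' ?_ EventuallyEq.rfl
  filter_upwards [hq.eventually hpos, ((tendsto_add_atTop_iff_nat 1).2 hq).eventually hpos]
    with n h h'
  simp [exp_sub, exp_log h, exp_log h']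

theorem tendsto_inv_rpow_mul_sub_inv_rpow_mul {γ : ℝ} (hγ : 0 < γ)
    (hd : ∀ᶠ x in 𝓝[>] 0, DifferentiableAt ℝ V x) (hpos : ∀ᶠ x in 𝓝[>] 0, 0 < V x)
    (hratio : Tendsto (fun x => x * deriv V x / V x) (𝓝[>] 0) (𝓝 0))
    (hq : Tendsto q atTop (𝓝[>] 0)) (hrec : ∀ n, q (n + 1) = q n * (1 - q n ^ γ * V (q n))) :
    Tendsto (fun n => (q (n + 1) ^ γ * V (q (n + 1)))⁻¹ - (q n ^ γ * V (q n))⁻¹) atTop (𝓝 γ) := by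
  set w := fun n => q n ^ γ * V (q n) with hw_def
  have hq' := (tendsto_add_atTop_iff_nat 1).2 hq
  have hw : Tendsto w atTop (𝓝 0) := (tendsto_rpow_mul_nhdsGT_zero hγ hd hpos hratio).comp hq
  have hwpos : ∀ᶠ n in atTop, 0 < w n := by
    filter_upwards [hq.eventually hpos, hq.eventually self_mem_nhdsWithin] with n hV hqn
    exact mul_pos (rpow_pos_of_pos hqn γ) hV
  have hρ := isLittleO_div_sub_one hd hpos hratio hq hw (hwpos.mono fun _ => le_of_lt) hrec
  refine (tendsto_one_sub_rpow_neg_mul_sub_one_div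
    (tendsto_nhdsWithin_of_tendsto_nhds_of_eventually_within _ hw (hwpos.mono fun _ => ne_of_gt))
    hρ).congr' ?_
  filter_upwards [hwpos, hq.eventually hpos, hq'.eventually hpos, hq.eventually self_mem_nhdsWithin,
    hq'.eventually self_mem_nhdsWithin] with n hwn hV hV' hqn hqn'
  have h1w : 0 < 1 - w n := pos_of_mul_pos_right (hrec n ▸ hqn' : 0 < q n * (1 - w n)) hqn.le
  have hsucc : q (n + 1) ^ γ = q n ^ γ * (1 - w n) ^ γ := by
    rw [hrec, mul_rpow hqn.le h1w.le]
  simp only [hw_def] at hwn h1w hsucc ⊢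
  rw [hsucc, rpow_neg h1w.le]
  have := rpow_pos_of_pos h1w γ
  have := rpow_pos_of_pos (show 0 < q n from hqn) γ
  field_simp

end SlowVariation

theorem stmt17_general (γ : ℝ) (hγ : 0 < γ) (V₁ v : ℝ → ℝ)
    (hV₁ : ContDiffOn ℝ 1 V₁ (Ioc 0 1))
    (hV₁pos : ∀ x ∈ Ioc (0:ℝ) 1, 0 < V₁ x)
    (hratio : Tendsto (fun x => x * deriv V₁ x / V₁ x) (𝓝[>] (0:ℝ)) (𝓝 0))
    (hv : ∀ x, v x = x ^ γ * V₁ x)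
    (q : ℕ → ℝ) (hqmem : ∀ n, q n ∈ Ioc (0:ℝ) 1)
    (hrec : ∀ n, q (n + 1) = q n * (1 - v (q n)))
    (hlim : Tendsto q atTop (𝓝 0)) :
    Tendsto (fun n : ℕ => γ * (n : ℝ) * v (q n)) atTop (𝓝 1) := by
  obtain rfl : v = fun x => x ^ γ * V₁ x := funext hv
  have hd : ∀ᶠ x in 𝓝[>] 0, DifferentiableAt ℝ V₁ x := by
    filter_upwards [Ioo_mem_nhdsGT one_pos] with x hx
    exact (hV₁.differentiableOn one_ne_zero).differentiableAt (Ioc_mem_nhds_iff.2 hx)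
  have hpos : ∀ᶠ x in 𝓝[>] 0, 0 < V₁ x := by
    filter_upwards [Ioc_mem_nhdsGT one_pos] using hV₁pos
  have hq : Tendsto q atTop (𝓝[>] 0) :=
    tendsto_nhdsWithin_iff.2 ⟨hlim, .of_forall fun n => (hqmem n).1⟩
  have hgrowth := tendsto_div_natCast_of_tendsto_sub (b := fun n => (q n ^ γ * V₁ (q n))⁻¹)
    (tendsto_inv_rpow_mul_sub_inv_rpow_mul hγ hd hpos hratio hq hrec)
  have := (tendsto_const_nhds (x := γ)).div hgrowth hγ.ne'
  rw [div_self hγ.ne'] at this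
  refine this.congr' ?_
  filter_upwards [eventually_ne_atTop 0] with n hn
  simp only [Pi.div_apply]
  field_simp

/-- For the recurrence `q(0) = 1`, `q(n+1) = q(n)(1 - v(q(n)))`
with `v(x) = x^γ V₁(x)`, `γ > 0`, `V₁ ∈ SV₀*`, and `q(n) → 0`, one has
`v(q(n)) ∼ 1/(γ n)` as `n → ∞`. -/
theorem stmt17 (γ : ℝ) (hγ : 0 < γ) (V₁ v : ℝ → ℝ)
    (hV₁ : ContDiffOn ℝ 1 V₁ (Ioc 0 1))
    (hV₁pos : ∀ x ∈ Ioc (0:ℝ) 1, 0 < V₁ x)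
    (hV₁sv : ∀ t > (0:ℝ), Tendsto (fun x => V₁ (t * x) / V₁ x) (𝓝[>] (0:ℝ)) (𝓝 1))
    (hratio : Tendsto (fun x => x * deriv V₁ x / V₁ x) (𝓝[>] (0:ℝ)) (𝓝 0))
    (hv : ∀ x, v x = x ^ γ * V₁ x)
    (q : ℕ → ℝ) (hq0 : q 0 = 1) (hqmem : ∀ n, q n ∈ Ioc (0:ℝ) 1)
    (hrec : ∀ n, q (n + 1) = q n * (1 - v (q n)))
    (hlim : Tendsto q atTop (𝓝 0)) :
    Tendsto (fun n : ℕ => γ * (n : ℝ) * v (q n)) atTop (𝓝 1) :=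
  stmt17_general γ hγ V₁ v hV₁ hV₁pos hratio hv q hqmem hrec hlim
end
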